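/- Let ψ_k(y) = θ^k[(1−η)h_k(y) + η·h_k((1−1/η)y)] and a_k = ‖ψ_k‖²_{L²(N(0,1))}. Then a₁ = 0, and for every k ≥ 2, a_k ≤ η²·(Cθ²/η²)^k for a universal constant C > 0. -/

import Mathlib

/-!
The three-term recurrence `He_{n+2} = x He_{n+1} - (n+1) He_n` gives the pointwise bound
`|He_n(x)| ≤ (|x| + √n)^n`, hence `h_n(x)² ≤ 4^n (x^{2n} + n^n) / n!`. By Fernique's theorem
`E exp(sY²) < ∞` for some `s > 0`, and `y^{2n} ≤ n! s^{-n} exp(s y²)` then bounds the moments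
`E Y^{2n}` by `n!` times a geometric factor, so `E h_n(cY)² ≤ D (B c²)^n` for `|c| ≥ 1`, with
`D, B` depending only on `s`. With `c = 1 - 1/η`, `c² ≤ 1/η²`, the bound on `a_k` follows from `(x+y)² ≤ 2x² + 2y²`;
`a₁ = 0` because `h₁(y) = y` and the two terms of `ψ₁` cancel.
-/

open MeasureTheory ProbabilityTheory

/-- The normalized probabilist's Hermite polynomials, orthonormal in
`L²(N(0,1))`. -/
noncomputable def hermiteN (j : ℕ) (x : ℝ) : ℝ :=
  (Polynomial.aeval x (Polynomial.hermite j)) / Real.sqrt (Nat.factorial j)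

open Polynomial Real Nat

namespace Polynomial

theorem derivative_hermite_succ (n : ℕ) :
    derivative (hermite (n + 1)) = (n + 1 : ℤ[X]) * hermite n := by
  induction n with
  | zero => simp
  | succ n ih =>
    rw [hermite_succ (n + 1), derivative_sub, derivative_mul, derivative_X, ih, hermite_succ n]
    simp
    ring

theorem hermite_add_two (n : ℕ) :
    hermite (n + 2) = X * hermite (n + 1) - (n + 1 : ℤ[X]) * hermite n := by
  rw [hermite_succ (n + 1), derivative_hermite_succ]

end Polynomial

theorem abs_aeval_hermite_le (n : ℕ) (x : ℝ) :
    |aeval x (hermite n)| ≤ (|x| + √n) ^ n := by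
  induction n using Nat.twoStepInduction with
  | zero => simp
  | one => simp
  | more n ih₀ ih₁ =>
    have hrec : |aeval x (hermite (n + 2))|
        ≤ |x| * |aeval x (hermite (n + 1))| + (n + 1) * |aeval x (hermite n)| := by
      rw [hermite_add_two]
      simp only [map_sub, map_mul, aeval_X, map_add, map_natCast, map_one]
      refine (abs_sub _ _).trans ?_
      rw [abs_mul, abs_mul, abs_of_nonneg (by positivity : (0 : ℝ) ≤ n + 1)]
    have h₀ : |aeval x (hermite n)| ≤ (|x| + √(n + 1 : ℕ)) ^ n := ih₀.trans (by gcongr; simp)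
    have hstep : |x| * (|x| + √(n + 1 : ℕ)) + (n + 1) ≤ (|x| + √(n + 2 : ℕ)) ^ 2 := by
      have hs : √((n + 1 : ℕ) : ℝ) ≤ √(n + 2 : ℕ) := Real.sqrt_le_sqrt (by simp)
      have hsq : √((n + 2 : ℕ) : ℝ) ^ 2 = n + 2 := by rw [sq_sqrt (by positivity)]; push_cast; ring
      nlinarith [mul_le_mul_of_nonneg_left hs (abs_nonneg x),
        mul_nonneg (abs_nonneg x) (sqrt_nonneg ((n + 2 : ℕ) : ℝ))]
    calc |aeval x (hermite (n + 2))|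
        ≤ |x| * (|x| + √(n + 1 : ℕ)) ^ (n + 1) + (n + 1) * (|x| + √(n + 1 : ℕ)) ^ n :=
          hrec.trans (by gcongr)
      _ = (|x| + √(n + 1 : ℕ)) ^ n * (|x| * (|x| + √(n + 1 : ℕ)) + (n + 1)) := by ring
      _ ≤ (|x| + √(n + 2 : ℕ)) ^ n * (|x| + √(n + 2 : ℕ)) ^ 2 := by gcongr; norm_num
      _ = _ := by ring

theorem hermiteN_sq_le (n : ℕ) (x : ℝ) :
    hermiteN n x ^ 2 ≤ 4 ^ n * (x ^ (2 * n) + n ^ n) / n ! := by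
  rw [hermiteN, div_pow, sq_sqrt (by positivity)]
  gcongr
  calc aeval x (hermite n) ^ 2 = |aeval x (hermite n)| ^ 2 := (sq_abs _).symm
    _ ≤ ((|x| + √n) ^ n) ^ 2 := by gcongr; exact abs_aeval_hermite_le n x
    _ = (|x| + √n) ^ (2 * n) := by ring
    _ ≤ 2 ^ (2 * n - 1) * (|x| ^ (2 * n) + √n ^ (2 * n)) :=
        add_pow_le (by positivity) (by positivity) _
    _ ≤ 4 ^ n * (x ^ (2 * n) + n ^ n) := by
        rw [pow_mul |x|, sq_abs, pow_mul x, pow_mul √n, sq_sqrt (by positivity),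
          show (4 : ℝ) ^ n = 2 ^ (2 * n) by rw [pow_mul]; norm_num]
        gcongr
        · norm_num
        · omega

theorem hermiteN_one (x : ℝ) : hermiteN 1 x = x := by
  simp [hermiteN]

theorem continuous_hermiteN (n : ℕ) : Continuous (hermiteN n) :=
  (Polynomial.continuous_aeval _).div_const _

section GaussianTail

variable {μ : Measure ℝ} {s : ℝ}

theorem pow_two_mul_le_mul_exp (hs : 0 < s) (n : ℕ) (y : ℝ) :
    y ^ (2 * n) ≤ n ! / s ^ n * exp (s * y ^ 2) := by
  have h := Real.pow_div_factorial_le_exp _ (by positivity : 0 ≤ s * y ^ 2) n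
  calc y ^ (2 * n) = (s * y ^ 2) ^ n / n ! * (n ! / s ^ n) := by
        field_simp
        ring
    _ ≤ exp (s * y ^ 2) * (n ! / s ^ n) := by gcongr
    _ = n ! / s ^ n * exp (s * y ^ 2) := mul_comm _ _

theorem integrable_pow_two_mul (hs : 0 < s) (hμ : Integrable (fun y ↦ exp (s * y ^ 2)) μ)
    (n : ℕ) : Integrable (fun y ↦ y ^ (2 * n)) μ := by
  refine (hμ.const_mul (n ! / s ^ n)).mono' (by fun_prop) (ae_of_all _ fun y ↦ ?_)
  rw [Real.norm_eq_abs, abs_of_nonneg (by rw [pow_mul]; positivity)]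
  exact pow_two_mul_le_mul_exp hs n y

theorem integral_pow_two_mul_le (hs : 0 < s) (hμ : Integrable (fun y ↦ exp (s * y ^ 2)) μ)
    (n : ℕ) : ∫ y, y ^ (2 * n) ∂μ ≤ n ! / s ^ n * ∫ y, exp (s * y ^ 2) ∂μ := by
  rw [← integral_const_mul]
  exact integral_mono (integrable_pow_two_mul hs hμ n) (hμ.const_mul _)
    (pow_two_mul_le_mul_exp hs n)

theorem integrable_hermiteN_sq_majorant [IsFiniteMeasure μ] (hs : 0 < s)
    (hμ : Integrable (fun y ↦ exp (s * y ^ 2)) μ) (n : ℕ) (c : ℝ) :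
    Integrable (fun y ↦ 4 ^ n * ((c ^ 2) ^ n * y ^ (2 * n) + n ^ n) / n !) μ :=
  ((((integrable_pow_two_mul hs hμ n).const_mul _).add
    (integrable_const _)).const_mul _).div_const _

theorem memLp_hermiteN_comp_mul [IsFiniteMeasure μ] (hs : 0 < s)
    (hμ : Integrable (fun y ↦ exp (s * y ^ 2)) μ) (n : ℕ) (c : ℝ) :
    MemLp (fun y ↦ hermiteN n (c * y)) 2 μ := by
  have hmeas : AEStronglyMeasurable (fun y ↦ hermiteN n (c * y)) μ :=
    ((continuous_hermiteN n).comp (continuous_const_mul c)).aestronglyMeasurable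
  refine (memLp_two_iff_integrable_sq hmeas).2 <|
    (integrable_hermiteN_sq_majorant hs hμ n c).mono' (hmeas.pow 2) (ae_of_all _ fun y ↦ ?_)
  rw [Real.norm_eq_abs, abs_of_nonneg (sq_nonneg _), ← pow_mul c, ← mul_pow]
  exact hermiteN_sq_le n (c * y)

theorem integral_hermiteN_comp_mul_sq_le [IsProbabilityMeasure μ] (hs : 0 < s)
    (hμ : Integrable (fun y ↦ exp (s * y ^ 2)) μ) (n : ℕ) {c : ℝ} (hc : 1 ≤ |c|) :
    ∫ y, hermiteN n (c * y) ^ 2 ∂μ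
      ≤ (∫ y, exp (s * y ^ 2) ∂μ + 1) * (4 * (s⁻¹ + exp 1) * c ^ 2) ^ n := by
  set A := ∫ y, exp (s * y ^ 2) ∂μ
  have hA : 0 ≤ A := integral_nonneg fun y ↦ (exp_pos _).le
  have hc2 : 1 ≤ c ^ 2 := by rw [← sq_abs]; nlinarith
  have hnn : (n : ℝ) ^ n ≤ (c ^ 2) ^ n * (n ! * exp 1 ^ n) := by
    have h := Real.pow_div_factorial_le_exp _ (n.cast_nonneg (α := ℝ)) n
    rw [div_le_iff₀ (by positivity), ← exp_one_pow, mul_comm] at h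
    exact h.trans (le_mul_of_one_le_left (by positivity) (one_le_pow₀ hc2))
  calc ∫ y, hermiteN n (c * y) ^ 2 ∂μ
      ≤ ∫ y, 4 ^ n * ((c ^ 2) ^ n * y ^ (2 * n) + n ^ n) / (n ! : ℝ) ∂μ := by
        refine integral_mono (memLp_hermiteN_comp_mul hs hμ n c).integrable_sq
          (integrable_hermiteN_sq_majorant hs hμ n c) fun y ↦ ?_
        rw [← pow_mul c, ← mul_pow]
        exact hermiteN_sq_le n (c * y)
    _ = 4 ^ n * ((c ^ 2) ^ n * ∫ y, y ^ (2 * n) ∂μ + n ^ n) / n ! := by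
        rw [integral_div, integral_const_mul, integral_add
          ((integrable_pow_two_mul hs hμ n).const_mul _) (integrable_const _),
          integral_const_mul]
        simp
    _ ≤ 4 ^ n * ((c ^ 2) ^ n * (n ! / s ^ n * A) + (c ^ 2) ^ n * (n ! * exp 1 ^ n)) / n ! := by
        gcongr
        exact integral_pow_two_mul_le hs hμ n
    _ = (4 * c ^ 2) ^ n * (A * s⁻¹ ^ n + exp 1 ^ n) := by
        rw [inv_pow]
        field_simp
        ring
    _ ≤ (4 * c ^ 2) ^ n * ((A + 1) * (s⁻¹ + exp 1) ^ n) := by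
        have h₁ : s⁻¹ ^ n ≤ (s⁻¹ + exp 1) ^ n := by gcongr; linarith [exp_pos 1]
        have h₂ : exp 1 ^ n ≤ (s⁻¹ + exp 1) ^ n := by gcongr; linarith [inv_pos.2 hs]
        gcongr
        nlinarith
    _ = (A + 1) * (4 * (s⁻¹ + exp 1) * c ^ 2) ^ n := by
        rw [mul_pow (4 * _), mul_pow (4 : ℝ) (s⁻¹ + exp 1)]
        ring

end GaussianTail

theorem integral_sq_add_le {α : Type*} [MeasurableSpace α] {μ : Measure α} {f g : α → ℝ}
    (hf : MemLp f 2 μ) (hg : MemLp g 2 μ) (a b : ℝ) :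
    ∫ x, (a * f x + b * g x) ^ 2 ∂μ
      ≤ 2 * a ^ 2 * ∫ x, f x ^ 2 ∂μ + 2 * b ^ 2 * ∫ x, g x ^ 2 ∂μ := by
  rw [← integral_const_mul, ← integral_const_mul, ← integral_add
    (hf.integrable_sq.const_mul _) (hg.integrable_sq.const_mul _)]
  refine integral_mono ((hf.const_mul a).add (hg.const_mul b)).integrable_sq
    ((hf.integrable_sq.const_mul _).add (hg.integrable_sq.const_mul _)) fun x ↦ ?_
  dsimp only
  nlinarith [add_sq_le (a := a * f x) (b := b * g x)]

theorem coefficient_bound_of_moment_bounds {θ η D B M₁ M₂ : ℝ} {k : ℕ} (hk : 1 ≤ k) (hη : 0 < η)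
    (hη₁ : η < 1) (hD : 1 ≤ D) (hB : 0 ≤ B) (hM₁ : M₁ ≤ D * B ^ k)
    (hM₂ : M₂ ≤ D * (B / η ^ 2) ^ k) :
    2 * (θ ^ k * (1 - η)) ^ 2 * M₁ + 2 * (θ ^ k * η) ^ 2 * M₂
      ≤ η ^ 2 * (4 * D * B * θ ^ 2 / η ^ 2) ^ k := by
  have hBk : B ^ k ≤ η ^ 2 * (B / η ^ 2) ^ k := by
    rw [div_pow, mul_div_assoc', le_div_iff₀ (by positivity), mul_comm]
    gcongr
    exact pow_le_of_le_one (by positivity) (by nlinarith) (by omega)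
  have h4D : 4 * D ≤ (4 * D) ^ k := le_self_pow₀ (by linarith) (by omega)
  have hD₀ : 0 ≤ D := by linarith
  have hM₁' : (1 - η) ^ 2 * M₁ ≤ D * (η ^ 2 * (B / η ^ 2) ^ k) :=
    calc (1 - η) ^ 2 * M₁ ≤ (1 - η) ^ 2 * (D * B ^ k) := by gcongr
      _ ≤ D * B ^ k := mul_le_of_le_one_left (by positivity) (by nlinarith)
      _ ≤ D * (η ^ 2 * (B / η ^ 2) ^ k) := by gcongr
  calc 2 * (θ ^ k * (1 - η)) ^ 2 * M₁ + 2 * (θ ^ k * η) ^ 2 * M₂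
      = 2 * (θ ^ k) ^ 2 * ((1 - η) ^ 2 * M₁) + 2 * (θ ^ k * η) ^ 2 * M₂ := by ring
    _ ≤ 2 * (θ ^ k) ^ 2 * (D * (η ^ 2 * (B / η ^ 2) ^ k))
          + 2 * (θ ^ k * η) ^ 2 * (D * (B / η ^ 2) ^ k) := by gcongr
    _ = η ^ 2 * (4 * D) * (B * θ ^ 2 / η ^ 2) ^ k := by ring
    _ ≤ η ^ 2 * (4 * D) ^ k * (B * θ ^ 2 / η ^ 2) ^ k := by gcongr
    _ = η ^ 2 * (4 * D * B * θ ^ 2 / η ^ 2) ^ k := by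
        rw [mul_assoc, ← mul_pow]
        ring

/-- Bounds on the `L²(N(0,1))` norms of
`ψ_k(y) = θ^k[(1-η)h_k(y) + η·h_k((1-1/η)y)]`: there is a universal constant
`C > 0` such that `a₁ = 0` and `a_k ≤ η²(Cθ²/η²)^k` for all `k ≥ 2`, where
`a_k = ‖ψ_k‖²_{L²(N(0,1))}`. -/
theorem psi_coefficient_bound :
    ∃ C : ℝ, 0 < C ∧
      ∀ (θ η : ℝ), 0 < θ → θ < 1 → 0 < η → η < 1 / 2 →
        let ψ : ℕ → ℝ → ℝ := fun k y =>
          θ ^ k * ((1 - η) * hermiteN k y + η * hermiteN k ((1 - 1 / η) * y))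
        let a : ℕ → ℝ := fun k => ∫ y, (ψ k y) ^ 2 ∂(gaussianReal 0 1)
        a 1 = 0 ∧ ∀ k : ℕ, 2 ≤ k → a k ≤ η ^ 2 * (C * θ ^ 2 / η ^ 2) ^ k := by
  obtain ⟨s, hs, hγ⟩ : ∃ s, 0 < s ∧
      Integrable (fun y : ℝ ↦ exp (s * y ^ 2)) (gaussianReal 0 1) := by
    simpa using IsGaussian.exists_integrable_exp_sq (gaussianReal 0 1)
  set D := ∫ y, exp (s * y ^ 2) ∂(gaussianReal 0 1) + 1
  set B := 4 * (s⁻¹ + exp 1)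
  have hD : 1 ≤ D := le_add_of_nonneg_left (integral_nonneg fun y ↦ (exp_pos _).le)
  refine ⟨4 * D * B, by positivity, ?_⟩
  intro θ η _ _ hη hη₂ ψ a
  refine ⟨?_, fun k hk ↦ ?_⟩
  · have hψ : ∀ y, ψ 1 y = 0 := fun y ↦ by
      simp only [ψ, hermiteN_one]
      field_simp
      ring
    simp [a, hψ]
  · set c := 1 - 1 / η
    have hη' : 2 < 1 / η := by rw [lt_div_iff₀ hη]; linarith
    have hc : 1 ≤ |c| := by rw [abs_of_neg (by linarith)]; linarith
    have hc₂ : c ^ 2 ≤ 1 / η ^ 2 := by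
      rw [← one_div_pow]
      exact sq_le_sq' (by linarith) (by linarith)
    have h₁ := integral_hermiteN_comp_mul_sq_le hs hγ k (c := 1) (by simp)
    have h₂ := integral_hermiteN_comp_mul_sq_le hs hγ k hc
    calc a k = ∫ y, (θ ^ k * (1 - η) * hermiteN k (1 * y) + θ ^ k * η * hermiteN k (c * y)) ^ 2
          ∂(gaussianReal 0 1) := by
          simp only [a, ψ, one_mul]
          congr 1
          ext y
          ring
      _ ≤ _ := integral_sq_add_le (memLp_hermiteN_comp_mul hs hγ k 1)
          (memLp_hermiteN_comp_mul hs hγ k c) _ _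
      _ ≤ η ^ 2 * (4 * D * B * θ ^ 2 / η ^ 2) ^ k := by
          refine coefficient_bound_of_moment_bounds (by omega) hη (by linarith) hD (by positivity)
            (h₁.trans_eq (by ring)) (h₂.trans ?_)
          rw [div_eq_mul_one_div B]
          gcongr
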